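/- arXiv:2101.10233 — 7 statements merged into one kernel-verified Lean document; each statement's English description precedes it below -/
import Mathlib

section
/- (Demand Coverage Lemma) Let p₂ and p₂' be two paths (nonempty lists of queuing vectors in ℤʳ) and d ∈ ℕʳ a demand vector with demand(p₂', d) ≤ demand(p₂, d). Then for any path p₁, demand(p₁ ++ p₂', d) ≤ demand(p₁ ++ p₂, d). -/
/-- componentwise clamp of an integer vector to a natural-number vector -/
def mu {r : ℕ} (v : Fin r → ℤ) : Fin r → ℕ := fun i => (v i).toNat

/-- demand of a path (list of queuing vectors) w.r.t. a demand vector `d` -/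
def demand {r : ℕ} : List (Fin r → ℤ) → (Fin r → ℕ) → (Fin r → ℕ)
  | [], d => d
  | w :: p, d => mu (fun i => ((demand p d) i : ℤ) - w i)

theorem demand_coverage {r : ℕ} (p₂ p₂' p₁ : List (Fin r → ℤ))
    (hp₂ : p₂ ≠ []) (hp₂' : p₂' ≠ []) (d : Fin r → ℕ)
    (h : demand p₂' d ≤ demand p₂ d) :
    demand (p₁ ++ p₂') d ≤ demand (p₁ ++ p₂) d := by
  induction p₁ with
  | nil => simpa using h
  | cons w p ih =>
    intro i
    simp only [List.cons_append, demand, mu]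
    exact Int.toNat_le_toNat (sub_le_sub_right (Int.ofNat_le.mpr (ih i)) _)
end

section
/- If p₂ and p₂' are two paths with demand(p₂') ≤ demand(p₂) (with demand taken against the zero vector), and p₁ is a path such that p₁ ++ p₂ is feasible (i.e., demand(p₁ ++ p₂, 0) = 0), then p₁ ++ p₂' is also feasible. -/
lemma demand_append {r : ℕ} (p q : List (Fin r → ℤ)) (d : Fin r → ℕ) :
    demand (p ++ q) d = demand p (demand q d) := by
  induction p with
  | nil => rfl
  | cons w p ih => simp [demand, ih]

lemma demand_mono {r : ℕ} (p : List (Fin r → ℤ)) {d d' : Fin r → ℕ}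
    (h : d ≤ d') : demand p d ≤ demand p d' := by
  induction p with
  | nil => exact h
  | cons w p ih =>
    intro i
    simp only [demand, mu]
    exact Int.toNat_le_toNat (sub_le_sub_right (Int.ofNat_le.mpr (ih i)) _)

theorem feasible_of_demand_le {r : ℕ} (p₂ p₂' p₁ : List (Fin r → ℤ))
    (hp₂ : p₂ ≠ []) (hp₂' : p₂' ≠ [])
    (h : demand p₂' 0 ≤ demand p₂ 0)
    (hfeas : demand (p₁ ++ p₂) 0 = 0) :
    demand (p₁ ++ p₂') 0 = 0 := by
  rw [demand_append] at hfeas ⊢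
  have := demand_mono p₁ h
  rw [hfeas] at this
  exact le_antisymm this (by intro i; exact Nat.zero_le _)
end

section
/- Let p be a path (nonempty list of queuing vectors in ℤʳ) such that every component of every queuing vector in p is nonnegative (p contains no receive operations). Then for any d ∈ ℕʳ, demand(p, d) = μ(d - w_p), where w_p is the sum of all queuing vectors in p. -/
/-- componentwise sum of the queuing vectors of a path -/
def sumVec {r : ℕ} (p : List (Fin r → ℤ)) : Fin r → ℤ :=
  fun i => (p.map (fun w => w i)).sum

theorem demand_no_receive {r : ℕ} (p : List (Fin r → ℤ)) (hp : p ≠ [])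
    (hpos : ∀ w ∈ p, ∀ i, 0 ≤ w i) (d : Fin r → ℕ) :
    demand p d = mu (fun i => (d i : ℤ) - sumVec p i) := by
  clear hp
  induction p with
  | nil =>
    funext i
    simp [demand, mu, sumVec]
  | cons w p ih =>
    funext i
    have hw : 0 ≤ w i := hpos w (by simp) i
    have ihe := ih (fun v hv => hpos v (by simp [hv]))
    have h2 := congrFun ihe i
    show ((demand p d i : ℤ) - w i).toNat = ((d i : ℤ) - sumVec (w::p) i).toNat
    have h3 : sumVec (w::p) i = w i + sumVec p i := by simp [sumVec]
    rw [h2, h3]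
    simp only [mu]
    omega
end

section
/- Let p₁ be a path with all queuing-vector components nonnegative, p₂ any path starting where p₁ ends, and d ∈ ℕʳ. Then demand(p₁ ++ p₂, d) = μ(demand(p₂, d) - w_{p₁}), where w_{p₁} is the sum of queuing vectors of p₁. -/
lemma toNat_sub_key (v w : ℤ) (hw : 0 ≤ w) :
    ((v.toNat : ℤ) - w).toNat = (v - w).toNat := by
  omega

theorem demand_append_no_receive {r : ℕ} (p₁ p₂ : List (Fin r → ℤ))
    (hp₁ : p₁ ≠ []) (hp₂ : p₂ ≠ [])
    (hpos : ∀ w ∈ p₁, ∀ i, 0 ≤ w i) (d : Fin r → ℕ) :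
    demand (p₁ ++ p₂) d = mu (fun i => ((demand p₂ d) i : ℤ) - sumVec p₁ i) := by
  induction p₁ with
  | nil => exact absurd rfl hp₁
  | cons w p₁ ih =>
    rcases eq_or_ne p₁ [] with rfl | hne
    · simp [demand, sumVec, mu]
    · have hpos' : ∀ v ∈ p₁, ∀ i, 0 ≤ v i := fun v hv => hpos v (List.mem_cons_of_mem _ hv)
      have hw : ∀ i, 0 ≤ w i := hpos w List.mem_cons_self
      simp only [List.cons_append, demand, sumVec, List.map_cons, List.sum_cons]
      show (mu fun i => ((demand (p₁ ++ p₂) d) i : ℤ) - w i) = _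
      rw [ih hne hpos']
      funext i
      simp only [mu, sumVec]
      rw [toNat_sub_key _ _ (hw i)]
      ring_nf
end

section
/- (Supply Limit Lemma) Let p₁, p₂ be paths with all queuing-vector components nonnegative, and let p_b be a path with demand(p_b, 0) = d. Define supply(p, d) = min(s, d) componentwise, where s = μ(sum of queuing vectors of p) (which is nonnegative since all components are nonnegative). If supply(p₁, d) ≥ supply(p₂, d), then demand(p₁ ++ p_b, 0) ≤ demand(p₂ ++ p_b, 0). -/
/-- supply of a (receive-free) path, capped by the demand vector d -/
def supply {r : ℕ} (p : List (Fin r → ℤ)) (d : Fin r → ℕ) : Fin r → ℕ :=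
  fun i => min (sumVec p i).toNat (d i)

lemma sumVec_nonneg {r : ℕ} (p : List (Fin r → ℤ)) (hpos : ∀ w ∈ p, ∀ i, 0 ≤ w i)
    (i : Fin r) : 0 ≤ sumVec p i := by
  apply List.sum_nonneg
  intro x hx
  obtain ⟨w, hw, rfl⟩ := List.mem_map.mp hx
  exact hpos w hw i

lemma demand_eq {r : ℕ} (p : List (Fin r → ℤ)) (hpos : ∀ w ∈ p, ∀ i, 0 ≤ w i)
    (d : Fin r → ℕ) (i : Fin r) :
    demand p d i = d i - min (sumVec p i).toNat (d i) := by
  induction p with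
  | nil => simp [demand, sumVec]
  | cons w p ih =>
    have hw : 0 ≤ w i := hpos w List.mem_cons_self i
    have hs : 0 ≤ sumVec p i := sumVec_nonneg p (fun v hv => hpos v (List.mem_cons_of_mem _ hv)) i
    have ih' := ih (fun v hv => hpos v (List.mem_cons_of_mem _ hv))
    have hsum : sumVec (w :: p) i = w i + sumVec p i := by simp [sumVec]
    simp only [demand, mu, ih', hsum]
    omega

theorem supply_limit {r : ℕ} (p₁ p₂ pb : List (Fin r → ℤ))
    (hp₁ : p₁ ≠ []) (hp₂ : p₂ ≠ []) (hpb : pb ≠ [])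
    (hpos₁ : ∀ w ∈ p₁, ∀ i, 0 ≤ w i) (hpos₂ : ∀ w ∈ p₂, ∀ i, 0 ≤ w i)
    (d : Fin r → ℕ) (hd : demand pb 0 = d)
    (hsup : supply p₂ d ≤ supply p₁ d) :
    demand (p₁ ++ pb) 0 ≤ demand (p₂ ++ pb) 0 := by
  intro i
  rw [demand_append, demand_append, hd, demand_eq p₁ hpos₁ d i, demand_eq p₂ hpos₂ d i]
  have := hsup i
  simp only [supply] at this
  have h2 : min (sumVec p₂ i).toNat (d i) ≤ min (sumVec p₁ i).toNat (d i) := this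
  exact Nat.sub_le_sub_left h2 (d i)
end

section
/- (Soundness of the Forward DFAS abstraction relation for a single counter) Let k ≥ 1 be the bound and define the relation Pre ⊆ ℤ × ℤ × ℤ by: (p, q, s) ∈ Pre iff 0 ≤ p ≤ k and ((q ≥ 0 ∧ p + q ≤ k ∧ s = p + q) ∨ (q ≥ 0 ∧ p + q > k ∧ s = k) ∨ (q < 0 ∧ p = k ∧ 0 ≤ s ≤ k ∧ k - s ≤ -q) ∨ (q < 0 ∧ p < k ∧ p + q ≥ 0 ∧ s = p + q)). Then for any d₁ ∈ ℕ and w ∈ ℤ with d₁ + w ≥ 0, letting d₂ = d₁ + w, we have (min(d₁, k), w, min(d₂, k)) ∈ Pre. -/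
/-- The Forward DFAS abstract counter-update relation, for bound `k`. -/
def Pre (k p q s : ℤ) : Prop :=
  0 ≤ p ∧ p ≤ k ∧
  ((q ≥ 0 ∧ p + q ≤ k ∧ s = p + q) ∨
   (q ≥ 0 ∧ p + q > k ∧ s = k) ∨
   (q < 0 ∧ p = k ∧ 0 ≤ s ∧ s ≤ k ∧ k - s ≤ -q) ∨
   (q < 0 ∧ p < k ∧ p + q ≥ 0 ∧ s = p + q))

theorem pre_simulates (k : ℤ) (hk : 1 ≤ k) (d₁ : ℕ) (w : ℤ)
    (h : 0 ≤ (d₁ : ℤ) + w) :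
    Pre k (min (d₁ : ℤ) k) w (min ((d₁ : ℤ) + w) k) := by
  unfold Pre
  rw [min_def, min_def]
  split_ifs <;> omega
end

section
/- (Consistent abstraction of the Forward DFAS transfer function, single counter) Fix bound k ≥ 1 and a complete lattice Λ. Let D = {0,…,k} → Λ and D_c = ℕ → Λ, both ordered pointwise. Define γ : D → D_c by γ(l) = λ c. l(min(c, k)). For a monotone f : Λ → Λ and weight w ∈ ℤ, define fun : D → D by fun(l)(c₂) = ⨆ { f(l(c₁)) | (c₁, w, c₂) ∈ Pre } and fun_c : D_c → D_c by fun_c(l)(c₂) = ⨆ { f(l(c₁)) | c₁ ∈ ℕ, c₁ + w = c₂ }. Then for all l ∈ D, γ(fun(l)) ⊒ fun_c(γ(l)). -/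
/-- Abstract transfer function on `D = {0,…,k} → Λ`. -/
def funAbs {Λ : Type*} [CompleteLattice Λ] (k : ℕ) (w : ℤ) (f : Λ → Λ)
    (l : Fin (k + 1) → Λ) : Fin (k + 1) → Λ :=
  fun c₂ => ⨆ c₁ : Fin (k + 1), ⨆ _ : Pre (k : ℤ) (c₁ : ℤ) w (c₂ : ℤ), f (l c₁)

/-- Concrete transfer function on `D_c = ℕ → Λ`. -/
def funConc {Λ : Type*} [CompleteLattice Λ] (w : ℤ) (f : Λ → Λ)
    (l : ℕ → Λ) : ℕ → Λ :=
  fun c₂ => ⨆ c₁ : ℕ, ⨆ _ : (c₁ : ℤ) + w = (c₂ : ℤ), f (l c₁)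

/-- Concretization `γ : D → D_c`. -/
def gam {Λ : Type*} [CompleteLattice Λ] (k : ℕ) (l : Fin (k + 1) → Λ) : ℕ → Λ :=
  fun c => l ⟨min c k, by omega⟩

/-- `fun` is a consistent abstraction of `fun_c`: `γ(fun(l)) ⊒ fun_c(γ(l))`. -/
theorem funAbs_consistent_abstraction {Λ : Type*} [CompleteLattice Λ]
    (k : ℕ) (hk : 1 ≤ k) (w : ℤ) (f : Λ → Λ) (hf : Monotone f)
    (l : Fin (k + 1) → Λ) :
    funConc w f (gam k l) ≤ gam k (funAbs k w f l) := by
  intro c₂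
  simp only [funConc, funAbs, gam]
  refine iSup_le fun c₁ => iSup_le fun h => ?_
  refine le_iSup_of_le ⟨min c₁ k, by omega⟩ (le_iSup_of_le ?_ le_rfl)
  simp only [Pre]
  push_cast
  omega
end
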